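/- arXiv:2605.15670 — 7 statements merged into one kernel-verified Lean document; each statement's English description precedes it below -/
import Mathlib

section
/- Let P : R → R be a Rota–Baxter operator of weight zero on the truncated polynomial algebra R = K ⊕ V. Then the image of P is contained in V; in particular P(1) ∈ V and P(V) ⊆ V. -/
/-!
Compose the Rota–Baxter identity with the augmentation `ε = fst`. For `m ∈ V` and
`t = ε (P m)`, the products with `m` collapse to `m * P m + P m * m = 2t • m`, so the identity
reads `t² = 2t²`, forcing `t = 0`. Then `ε ∘ P` is `x ↦ ε x · ε (P 1)`, and the identity at
`x = y = 1` gives `c² = 2c²` for `c = ε (P 1)`, so `c = 0` as well.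
-/

open TrivSqZeroExt

def IsRotaBaxterOfWeightZero {R A : Type*} [CommSemiring R] [Semiring A] [Module R A]
    (P : A →ₗ[R] A) : Prop :=
  ∀ x y, P x * P y = P (x * P y + P x * y)

theorem TrivSqZeroExt.fst_linearMap_apply {R M : Type*} [CommSemiring R] [AddCommMonoid M]
    [Module R M] {P : TrivSqZeroExt R M →ₗ[R] TrivSqZeroExt R M}
    (hV : ∀ m, (P (inr m)).fst = 0) (x : TrivSqZeroExt R M) :
    (P x).fst = x.fst * (P 1).fst := by
  have hx : x = x.fst • 1 + inr x.snd := by ext <;> simp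
  conv_lhs => rw [hx, map_add, map_smul]
  simp [hV]

theorem TrivSqZeroExt.inr_mul_add_mul_inr {R M : Type*} [CommSemiring R] [AddCommMonoid M]
    [Module R M] [Module Rᵐᵒᵖ M] [IsCentralScalar R M] (m : M) (x : TrivSqZeroExt R M) :
    inr m * x + x * inr m = (2 * x.fst) • inr m := by
  ext <;> simp [two_mul, add_smul, op_smul_eq_smul]

section

variable {R M : Type*} [CommRing R] [IsReduced R] [AddCommGroup M] [Module R M]
  [Module Rᵐᵒᵖ M] [IsCentralScalar R M] {P : TrivSqZeroExt R M →ₗ[R] TrivSqZeroExt R M}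

theorem IsRotaBaxterOfWeightZero.fst_apply_inr (hP : IsRotaBaxterOfWeightZero P) (m : M) :
    (P (inr m)).fst = 0 := by
  set t := (P (inr m)).fst
  have hsq : t * t = 2 * t * t := by
    simpa [inr_mul_add_mul_inr] using congrArg fst (hP (inr m) (inr m))
  exact IsNilpotent.eq_zero ⟨2, by linear_combination -hsq⟩

theorem IsRotaBaxterOfWeightZero.fst_apply_one (hP : IsRotaBaxterOfWeightZero P) :
    (P 1).fst = 0 := by
  set c := (P 1).fst
  have hsq : c * c = 2 * (c * c) := by
    simpa [fst_linearMap_apply hP.fst_apply_inr (P 1), two_mul]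
      using congrArg fst (hP 1 1)
  exact IsNilpotent.eq_zero ⟨2, by linear_combination -hsq⟩

theorem IsRotaBaxterOfWeightZero.fst_apply (hP : IsRotaBaxterOfWeightZero P)
    (x : TrivSqZeroExt R M) : (P x).fst = 0 := by
  rw [fst_linearMap_apply hP.fst_apply_inr, hP.fst_apply_one, mul_zero]

end

theorem weight_zero_image_in_V_general {K : Type*} [Field K] {n : ℕ}
    (P : TrivSqZeroExt K (Fin n → K) →ₗ[K] TrivSqZeroExt K (Fin n → K))
    (hP : ∀ x y, P x * P y = P (x * P y + P x * y)) :
    (∀ x, (P x).fst = 0) ∧ (P 1).fst = 0 ∧ ∀ u : Fin n → K, (P (inr u)).fst = 0 := by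
  have hRB : IsRotaBaxterOfWeightZero P := hP
  exact ⟨hRB.fst_apply, hRB.fst_apply_one, hRB.fst_apply_inr⟩

/-- if `P` is a Rota–Baxter operator of weight zero on the truncated
polynomial algebra `R = K ⊕ V` (the trivial square-zero extension of `K` by `V = Kⁿ`),
then the image of `P` is contained in `V`; in particular `P 1 ∈ V` and `P(V) ⊆ V`. -/
theorem weight_zero_image_in_V {K : Type*} [Field K] [CharZero K] {n : ℕ} (hn : 1 ≤ n)
    (P : TrivSqZeroExt K (Fin n → K) →ₗ[K] TrivSqZeroExt K (Fin n → K))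
    (hP : ∀ x y, P x * P y = P (x * P y + P x * y)) :
    (∀ x, (P x).fst = 0) ∧ (P 1).fst = 0 ∧ ∀ u : Fin n → K, (P (inr u)).fst = 0 :=
  weight_zero_image_in_V_general P hP
end

section
/- Let P : R → R be a Rota–Baxter operator of weight zero on the truncated polynomial algebra R = K ⊕ V. Then P(P(1)) = 0. -/
open TrivSqZeroExt

/-!
With `e = P 1` and `f = P e`, the Rota–Baxter identity at `(1, 1)` and at `(e, e)` gives
`2 f = e²` and `f² = P (e³)`. In `K ⊕ V` the element `e - c` squares to zero, where `c` is the
`K`-component of `e`, so `e³` is a `K`-linear combination of `e` and `1` and `P (e³)` is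
known explicitly. Expanding `e⁴ = 4 f²` both ways leaves `3 c⁴ = 0`, hence `c = 0`, `e² = 0`
and `f = 0`.
-/

theorem sub_inl_fst_mul_self_eq_zero {R M : Type*} [Ring R] [AddCommGroup M] [Module R M]
    [Module Rᵐᵒᵖ M] (x : TrivSqZeroExt R M) :
    (x - inl x.fst) * (x - inl x.fst) = 0 := by
  have hx : x - inl x.fst = inr x.snd := by ext <;> simp
  rw [hx, inr_mul_inr]

theorem two_mul_P_P_one {R A : Type*} [Semiring R] [Semiring A] [Module R A] (P : A →ₗ[R] A)
    (hP : ∀ x y, P x * P y = P (x * P y + P x * y)) : 2 * P (P 1) = P 1 ^ 2 := by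
  rw [sq, hP, one_mul, mul_one, two_mul, map_add]

theorem P_P_one_eq_zero_of_sq_sub_algebraMap_eq_zero {K A : Type*} [Field K] [CharZero K]
    [CommRing A] [Nontrivial A] [Algebra K A] (P : A →ₗ[K] A)
    (hP : ∀ x y, P x * P y = P (x * P y + P x * y)) (c : K)
    (hc : (P 1 - algebraMap K A c) ^ 2 = 0) : P (P 1) = 0 := by
  set e := P 1
  set f := P e
  have hf : 2 * f = e ^ 2 := two_mul_P_P_one P hP
  have hff : f * f = algebraMap K A (3 * c ^ 2) * f - algebraMap K A (2 * c ^ 3) * e := by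
    have hcube : e * f + f * e = (3 * c ^ 2) • e - (2 * c ^ 3) • 1 := by
      simp only [Algebra.smul_def, map_mul, map_pow, map_ofNat]
      linear_combination e * hf + (e + 2 * algebraMap K A c) * hc
    rw [hP, hcube, map_sub, map_smul, map_smul, Algebra.smul_def, Algebra.smul_def]
  have hc4 : algebraMap K A (3 * c ^ 4) = 0 := by
    simp only [map_mul, map_pow, map_ofNat] at hff ⊢
    linear_combination 4 * hff - (e - algebraMap K A c) * (e + 3 * algebraMap K A c) * hc
      - (2 * f + e ^ 2 - 6 * algebraMap K A c ^ 2) * hf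
  have hc0 : c = 0 := by
    simpa using (algebraMap K A).injective (hc4.trans (map_zero _).symm)
  have h2f : (2 : K) • f = 0 := by
    rw [two_smul, ← two_mul, hf]
    simpa [hc0] using hc
  exact (smul_eq_zero.mp h2f).resolve_left two_ne_zero

theorem weight_zero_P_P_one_general {K : Type*} [Field K] [CharZero K] {n : ℕ}
    (P : TrivSqZeroExt K (Fin n → K) →ₗ[K] TrivSqZeroExt K (Fin n → K))
    (hP : ∀ x y, P x * P y = P (x * P y + P x * y)) :
    P (P 1) = 0 :=
  P_P_one_eq_zero_of_sq_sub_algebraMap_eq_zero P hP _ <| (sq _).trans <|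
    sub_inl_fst_mul_self_eq_zero (P 1)

/-- if `P` is a Rota–Baxter operator of weight zero on the truncated
polynomial algebra `R = K ⊕ V`, then `P (P 1) = 0`. -/
theorem weight_zero_P_P_one {K : Type*} [Field K] [CharZero K] {n : ℕ} (hn : 1 ≤ n)
    (P : TrivSqZeroExt K (Fin n → K) →ₗ[K] TrivSqZeroExt K (Fin n → K))
    (hP : ∀ x y, P x * P y = P (x * P y + P x * y)) :
    P (P 1) = 0 :=
  weight_zero_P_P_one_general P hP
end

section
/- Let P : R → R be a Rota–Baxter operator of weight zero on the truncated polynomial algebra R = K ⊕ V. Then P² = 0, i.e. P(P(x)) = 0 for all x ∈ R. -/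
/-!
Let `φ = fst ∘ P`. On the square-zero ideal `ker fst`, multiplication by any `z` is scalar
multiplication by `fst z`, so the Rota–Baxter identity at `x = y = a ∈ ker fst` reads
`φ a ^ 2 = 2 φ a ^ 2`; hence `φ` kills `ker fst`, so `φ = fst · φ 1`, and the identity at
`x = y = 1` gives `φ 1 = 0`. Thus `P` lands in `ker fst`, all products `P x * P y` vanish, and
the identity at `y = 1` yields `P (P x) = - fst x • P (P 1)` and `2 • P (P 1) = 0`.
-/

open TrivSqZeroExt

namespace TrivSqZeroExt

variable {R M : Type*} [Semiring R] [AddCommMonoid M] [Module R M] [Module Rᵐᵒᵖ M]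

theorem mul_eq_fst_smul_of_fst_eq_zero {a : TrivSqZeroExt R M} (ha : fst a = 0)
    (z : TrivSqZeroExt R M) : z * a = fst z • a := by
  ext
  · simp [ha]
  · simp [ha, snd_mul]

theorem mul_eq_zero_of_fst_eq_zero {a b : TrivSqZeroExt R M} (ha : fst a = 0)
    (hb : fst b = 0) : a * b = 0 := by
  rw [mul_eq_fst_smul_of_fst_eq_zero hb, ha, zero_smul]

end TrivSqZeroExt

section RotaBaxter

variable {K M : Type*} [Field K] [AddCommGroup M] [Module K M] [Module Kᵐᵒᵖ M]
  [IsCentralScalar K M]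
  {P : TrivSqZeroExt K M →ₗ[K] TrivSqZeroExt K M}

theorem fst_map_eq_zero_of_fst_eq_zero (hP : ∀ x y, P x * P y = P (x * P y + P x * y))
    {a : TrivSqZeroExt K M} (ha : fst a = 0) : fst (P a) = 0 := by
  have h := congrArg fst (hP a a)
  rw [mul_comm a, ← two_smul K, mul_eq_fst_smul_of_fst_eq_zero ha] at h
  simp only [fst_mul, map_smul, fst_smul, smul_eq_mul] at h
  have hsq : fst (P a) * fst (P a) = 0 := by linear_combination -h
  exact mul_self_eq_zero.mp hsq

theorem fst_map_eq_fst_mul_fst_map_one (hP : ∀ x y, P x * P y = P (x * P y + P x * y))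
    (z : TrivSqZeroExt K M) : fst (P z) = fst z * fst (P 1) := by
  have hker : fst (z - fst z • 1) = 0 := by simp
  have h := fst_map_eq_zero_of_fst_eq_zero hP hker
  rwa [map_sub, map_smul, fst_sub, fst_smul, smul_eq_mul, sub_eq_zero] at h

theorem fst_map_eq_zero (hP : ∀ x y, P x * P y = P (x * P y + P x * y))
    (z : TrivSqZeroExt K M) : fst (P z) = 0 := by
  have h := congrArg fst (hP 1 1)
  rw [one_mul, mul_one, ← two_smul K, map_smul, fst_smul, smul_eq_mul, fst_mul,
    fst_map_eq_fst_mul_fst_map_one hP (P 1)] at h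
  have hsq : fst (P 1) * fst (P 1) = 0 := by linear_combination -h
  rw [fst_map_eq_fst_mul_fst_map_one hP, mul_self_eq_zero.mp hsq, mul_zero]

theorem map_mul_map_add_map_mul_eq_zero (hP : ∀ x y, P x * P y = P (x * P y + P x * y))
    (x y : TrivSqZeroExt K M) : P (x * P y + P x * y) = 0 := by
  rw [← hP, mul_eq_zero_of_fst_eq_zero (fst_map_eq_zero hP x) (fst_map_eq_zero hP y)]

theorem map_map_one_eq_zero [NeZero (2 : K)] (hP : ∀ x y, P x * P y = P (x * P y + P x * y)) :
    P (P 1) = 0 := by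
  have h := map_mul_map_add_map_mul_eq_zero hP 1 1
  rwa [one_mul, mul_one, ← two_smul K, map_smul, smul_eq_zero,
    or_iff_right (NeZero.ne 2)] at h

end RotaBaxter

theorem weight_zero_P_sq_zero_general {K : Type*} [Field K] [CharZero K] {n : ℕ}
    (P : TrivSqZeroExt K (Fin n → K) →ₗ[K] TrivSqZeroExt K (Fin n → K))
    (hP : ∀ x y, P x * P y = P (x * P y + P x * y)) :
    ∀ x, P (P x) = 0 := by
  intro x
  have h := map_mul_map_add_map_mul_eq_zero hP x 1
  rwa [mul_one, mul_eq_fst_smul_of_fst_eq_zero (fst_map_eq_zero hP 1), map_add, map_smul,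
    map_map_one_eq_zero hP, smul_zero, zero_add] at h

/-- if `P` is a Rota–Baxter operator of weight zero on the truncated
polynomial algebra `R = K ⊕ V`, then `P² = 0`. -/
theorem weight_zero_P_sq_zero {K : Type*} [Field K] [CharZero K] {n : ℕ} (hn : 1 ≤ n)
    (P : TrivSqZeroExt K (Fin n → K) →ₗ[K] TrivSqZeroExt K (Fin n → K))
    (hP : ∀ x y, P x * P y = P (x * P y + P x * y)) :
    ∀ x, P (P x) = 0 :=
  weight_zero_P_sq_zero_general P hP
end

section
/- Let v₀ ∈ V and L ∈ End_K(V), and define the K-linear map P : R → R on the truncated polynomial algebra R = K ⊕ V by P(a + u) = a·v₀ + L(u) for a ∈ K, u ∈ V (so the image of P lies in V). Then P is a Rota–Baxter operator of weight zero if and only if L² = 0 and L(v₀) = 0. -/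
/-!
Since `P` takes values in the square-zero ideal `V`, the left side `P x * P y` of the
Rota–Baxter identity always vanishes, while `x * P y + P x * y = a • P y + b • P x ∈ V`
for `x = a + u`, `y = b + w`. The identity therefore says `L (a • P y + b • P x) = 0` for
all `x, y`. Taking `x = u ∈ V`, `y = 1` gives `L (L u) = 0`; taking `x = y = 1` gives
`2 • L v₀ = 0`.
-/

open TrivSqZeroExt

namespace TrivSqZeroExt

variable {R M : Type*} [CommSemiring R] [AddCommMonoid M] [Module R M] [Module Rᵐᵒᵖ M]

theorem mul_inr_eq_inr_fst_smul (x : TrivSqZeroExt R M) (m : M) :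
    x * inr m = inr (x.fst • m) := by
  ext <;> simp

theorem inr_mul_eq_inr_fst_smul [IsCentralScalar R M] (m : M) (x : TrivSqZeroExt R M) :
    inr m * x = inr (x.fst • m) := by
  ext <;> simp [op_smul_eq_smul]

variable [IsCentralScalar R M] {v₀ : M} {L : M →ₗ[R] M}
  {P : TrivSqZeroExt R M → TrivSqZeroExt R M}

theorem rotaBaxter_eq_iff (hP : ∀ x, P x = inr (x.fst • v₀ + L x.snd))
    (x y : TrivSqZeroExt R M) :
    P x * P y = P (x * P y + P x * y) ↔ L (x.fst • (P y).snd + y.fst • (P x).snd) = 0 := by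
  rw [hP x, hP y, inr_mul_inr, mul_inr_eq_inr_fst_smul, inr_mul_eq_inr_fst_smul, ← inr_add, hP,
    fst_inr, snd_inr, snd_inr, snd_inr, zero_smul, zero_add, eq_comm, ← inr_zero R,
    inr_injective.eq_iff]

theorem rotaBaxter_weight_zero_iff [IsAddTorsionFree M]
    (hP : ∀ x, P x = inr (x.fst • v₀ + L x.snd)) :
    (∀ x y, P x * P y = P (x * P y + P x * y)) ↔ L ∘ₗ L = 0 ∧ L v₀ = 0 := by
  simp_rw [rotaBaxter_eq_iff hP, hP, snd_inr]
  constructor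
  · intro h
    have hLL (u : M) : L (L u) = 0 := by simpa using h (inr u) 1
    have h_two : 2 • L v₀ = 2 • 0 := by simpa [two_nsmul] using h 1 1
    exact ⟨LinearMap.ext hLL, nsmul_right_injective two_ne_zero h_two⟩
  · rintro ⟨hLL, hLv₀⟩ x y
    have hLL' (u : M) : L (L u) = 0 := LinearMap.congr_fun hLL u
    simp [hLL', hLv₀]

end TrivSqZeroExt

theorem weight_zero_param_general {K : Type*} [Field K] [CharZero K] {n : ℕ}
    (v₀ : Fin n → K) (L : (Fin n → K) →ₗ[K] (Fin n → K))
    (P : TrivSqZeroExt K (Fin n → K) →ₗ[K] TrivSqZeroExt K (Fin n → K))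
    (hPdef : ∀ (a : K) (u : Fin n → K), P (inl a + inr u) = inr (a • v₀ + L u)) :
    (∀ x y, P x * P y = P (x * P y + P x * y)) ↔ (L ∘ₗ L = 0 ∧ L v₀ = 0) := by
  refine rotaBaxter_weight_zero_iff fun x => ?_
  rw [← hPdef, inl_fst_add_inr_snd_eq]

/-- for `v₀ ∈ V` and `L ∈ End_K(V)`, the linear map `P` on the truncated
polynomial algebra `R = K ⊕ V` given by `P(a + u) = a • v₀ + L u` (with image in `V`) is a
Rota–Baxter operator of weight zero iff `L² = 0` and `L v₀ = 0`. -/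
theorem weight_zero_param {K : Type*} [Field K] [CharZero K] {n : ℕ} (hn : 1 ≤ n)
    (v₀ : Fin n → K) (L : (Fin n → K) →ₗ[K] (Fin n → K))
    (P : TrivSqZeroExt K (Fin n → K) →ₗ[K] TrivSqZeroExt K (Fin n → K))
    (hPdef : ∀ (a : K) (u : Fin n → K), P (inl a + inr u) = inr (a • v₀ + L u)) :
    (∀ x y, P x * P y = P (x * P y + P x * y)) ↔ (L ∘ₗ L = 0 ∧ L v₀ = 0) :=
  weight_zero_param_general v₀ L P hPdef
end

section
/- The set of Rota–Baxter operators of weight zero on the truncated polynomial algebra R = K ⊕ V is in bijection with the set of pairs (v₀, L) ∈ V × End_K(V) satisfying L² = 0 and L(v₀) = 0, via P ↦ (P(1), P|_V). -/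
/-! Since `V² = 0`, a linear `P` with `P(a + u) = a P(1) + P(u)` is determined by `P(1)` and
`P|_V`. The `K`-component of the Rota–Baxter identity at `(u, u)` and at `(1, 1)` reads
`c² = 2c²` for `c` the `K`-component of `P(u)`, resp. of `P(1)`, so `P` maps into `V`. Then
`P x * P y = 0`, and with `P(a + u) = a v₀ + L u` the identity becomes
`2ab L v₀ + a L² w + b L² u = 0` for all `a + u`, `b + w`, i.e. `L² = 0` and `L v₀ = 0`. -/

open TrivSqZeroExt

def IsRotaBaxterWeightZero {K A : Type*} [CommSemiring K] [NonUnitalNonAssocSemiring A]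
    [Module K A] (P : A →ₗ[K] A) : Prop :=
  ∀ x y, P x * P y = P (x * P y + P x * y)

namespace TrivSqZeroExt

local notation "tsze" => TrivSqZeroExt

variable {K V : Type*} [Field K] [AddCommGroup V] [Module K V]

theorem linearMap_apply_eq {M : Type*} [AddCommGroup M] [Module K M]
    (P : tsze K V →ₗ[K] M) (z : tsze K V) : P z = z.fst • P 1 + P (inr z.snd) := by
  conv_lhs => rw [← inl_fst_add_inr_snd_eq z, ← mul_one z.fst, ← smul_eq_mul, inl_smul, inl_one,
    map_add, map_smul]

variable [Module Kᵐᵒᵖ V] [IsCentralScalar K V]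

theorem fst_apply_inr_of_isRotaBaxterWeightZero {P : tsze K V →ₗ[K] tsze K V}
    (hP : IsRotaBaxterWeightZero P) (u : V) : (P (inr u)).fst = 0 := by
  set c := (P (inr u)).fst
  have h : inr u * P (inr u) + P (inr u) * inr u = (2 * c) • inr u := by
    ext <;> simp [fst_mul, snd_mul, c, two_mul, add_smul, op_smul_eq_smul]
  have key := congrArg fst (hP (inr u) (inr u))
  rw [h, map_smul, fst_mul, fst_smul, smul_eq_mul] at key
  exact mul_self_eq_zero.mp (by linear_combination -key)

theorem fst_apply_one_of_isRotaBaxterWeightZero {P : tsze K V →ₗ[K] tsze K V}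
    (hP : IsRotaBaxterWeightZero P) : (P 1).fst = 0 := by
  have key := congrArg fst (hP 1 1)
  rw [one_mul, mul_one, fst_mul, linearMap_apply_eq P (P 1 + P 1)] at key
  simp only [fst_add, fst_smul, smul_eq_mul, fst_apply_inr_of_isRotaBaxterWeightZero hP,
    add_zero] at key
  exact mul_self_eq_zero.mp (by linear_combination -key)

variable (K V) in
def ofPair (v₀ : V) (L : V →ₗ[K] V) : tsze K V →ₗ[K] tsze K V :=
  inrHom K V ∘ₗ ((fstHom K K V).toLinearMap.smulRight v₀ + L ∘ₗ sndHom K V)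

@[simp]
theorem ofPair_apply (v₀ : V) (L : V →ₗ[K] V) (x : tsze K V) :
    ofPair K V v₀ L x = inr (x.fst • v₀ + L x.snd) := rfl

theorem eq_ofPair_of_isRotaBaxterWeightZero {P : tsze K V →ₗ[K] tsze K V}
    (hP : IsRotaBaxterWeightZero P) :
    P = ofPair K V (P 1).snd (sndHom K V ∘ₗ P ∘ₗ inrHom K V) := by
  ext z
  · simp [linearMap_apply_eq P z, fst_apply_one_of_isRotaBaxterWeightZero hP,
      fst_apply_inr_of_isRotaBaxterWeightZero hP]
  · simp [linearMap_apply_eq P z]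

theorem isRotaBaxterWeightZero_ofPair_iff [NeZero (2 : K)] (v₀ : V) (L : V →ₗ[K] V) :
    IsRotaBaxterWeightZero (ofPair K V v₀ L) ↔ L ∘ₗ L = 0 ∧ L v₀ = 0 := by
  constructor
  · intro hP
    refine ⟨LinearMap.ext fun u => ?_, ?_⟩
    · simpa using (congrArg snd (hP 1 (inr u))).symm
    · have h : (2 : K) • L v₀ = 0 := by
        simpa [two_smul] using (congrArg snd (hP 1 1)).symm
      exact (smul_eq_zero.mp h).resolve_left two_ne_zero
  · rintro ⟨hL, hv⟩ x y
    have hLL : ∀ u, L (L u) = 0 := LinearMap.congr_fun hL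
    ext <;> simp [fst_mul, snd_mul, op_smul_eq_smul, hLL, hv]

@[simp]
theorem snd_ofPair_one (v₀ : V) (L : V →ₗ[K] V) : (ofPair K V v₀ L 1).snd = v₀ := by
  simp

@[simp]
theorem sndHom_comp_ofPair_comp_inrHom (v₀ : V) (L : V →ₗ[K] V) :
    sndHom K V ∘ₗ ofPair K V v₀ L ∘ₗ inrHom K V = L := by
  ext; simp

end TrivSqZeroExt

theorem weight_zero_bijection_general {K : Type*} [Field K] [CharZero K] {n : ℕ} :
    ∃ e : {P : TrivSqZeroExt K (Fin n → K) →ₗ[K] TrivSqZeroExt K (Fin n → K) //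
            ∀ x y, P x * P y = P (x * P y + P x * y)} ≃
          {p : (Fin n → K) × ((Fin n → K) →ₗ[K] (Fin n → K)) //
            p.2 ∘ₗ p.2 = 0 ∧ p.2 p.1 = 0},
      ∀ P, (e P : (Fin n → K) × ((Fin n → K) →ₗ[K] (Fin n → K))) =
        ((P.1 1).snd, (sndHom K (Fin n → K)) ∘ₗ P.1 ∘ₗ (inrHom K (Fin n → K))) := by
  refine ⟨
    { toFun := fun P => ⟨((P.1 1).snd, sndHom K _ ∘ₗ P.1 ∘ₗ inrHom K _),
        (isRotaBaxterWeightZero_ofPair_iff _ _).mp <|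
          eq_ofPair_of_isRotaBaxterWeightZero P.2 ▸ P.2⟩
      invFun := fun p => ⟨ofPair K _ p.1.1 p.1.2,
        (isRotaBaxterWeightZero_ofPair_iff _ _).mpr p.2⟩
      left_inv := fun P => Subtype.ext (eq_ofPair_of_isRotaBaxterWeightZero P.2).symm
      right_inv := fun p => Subtype.ext <| Prod.ext (snd_ofPair_one _ _)
        (sndHom_comp_ofPair_comp_inrHom _ _) },
    fun _ => rfl⟩

/-- the set of weight-zero Rota–Baxter operators on the truncated polynomial
algebra `R = K ⊕ V` is in bijection with `{(v₀, L) ∈ V × End_K(V) : L² = 0, L v₀ = 0}`,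
via `P ↦ (P 1, P|_V)`. -/
theorem weight_zero_bijection {K : Type*} [Field K] [CharZero K] {n : ℕ} (hn : 1 ≤ n) :
    ∃ e : {P : TrivSqZeroExt K (Fin n → K) →ₗ[K] TrivSqZeroExt K (Fin n → K) //
            ∀ x y, P x * P y = P (x * P y + P x * y)} ≃
          {p : (Fin n → K) × ((Fin n → K) →ₗ[K] (Fin n → K)) //
            p.2 ∘ₗ p.2 = 0 ∧ p.2 p.1 = 0},
      ∀ P, (e P : (Fin n → K) × ((Fin n → K) →ₗ[K] (Fin n → K))) =
        ((P.1 1).snd, (sndHom K (Fin n → K)) ∘ₗ P.1 ∘ₗ (inrHom K (Fin n → K))) :=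
  weight_zero_bijection_general
end

section
/- Let P : R → R be a Rota–Baxter operator of weight one on the truncated polynomial algebra R = K ⊕ V. Then P maps V into V, i.e. P(V) ⊆ V. -/
open TrivSqZeroExt

def IsRotaBaxter {R A : Type*} [CommSemiring R] [NonUnitalNonAssocSemiring A] [Module R A]
    (w : R) (P : A →ₗ[R] A) : Prop :=
  ∀ x y, P x * P y = P (x * P y + P x * y + w • (x * y))

namespace TrivSqZeroExt

variable {R M : Type*} [CommSemiring R] [AddCommMonoid M] [Module R M] [Module Rᵐᵒᵖ M]

theorem inr_mul_eq_smul [IsCentralScalar R M] (m : M) (x : TrivSqZeroExt R M) :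
    inr m * x = x.fst • inr m := by
  ext <;> simp [op_smul_eq_smul]

theorem mul_inr_eq_smul (x : TrivSqZeroExt R M) (m : M) : x * inr m = x.fst • inr m := by
  ext <;> simp

end TrivSqZeroExt

/-- Since `V * V = 0`, the weight term drops out and the Rota–Baxter identity for `x = y = v`
reads `P v * P v = P (2 a • v)` with `a` the scalar part of `P v`; comparing scalar parts gives
`a ^ 2 = 2 a ^ 2`. -/
theorem IsRotaBaxter.fst_apply_inr_eq_zero {R M : Type*} [CommRing R] [NoZeroDivisors R]
    [AddCommGroup M] [Module R M] [Module Rᵐᵒᵖ M] [IsCentralScalar R M] {w : R}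
    {P : TrivSqZeroExt R M →ₗ[R] TrivSqZeroExt R M} (hP : IsRotaBaxter w P) (m : M) :
    (P (inr m)).fst = 0 := by
  set a := (P (inr m)).fst
  have hsq : P (inr m) * P (inr m) = (2 * a) • P (inr m) := by
    rw [hP, inr_mul_eq_smul, mul_inr_eq_smul, inr_mul_inr, smul_zero, add_zero, ← two_smul R,
      smul_smul, map_smul]
  have hfst : a * a = 2 * a * a := by
    simpa only [fst_mul, fst_smul, smul_eq_mul] using congrArg fst hsq
  exact mul_self_eq_zero.mp (by linear_combination -hfst)

theorem weight_one_maps_V_to_V_general {K : Type*} [Field K] {n : ℕ}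
    (P : TrivSqZeroExt K (Fin n → K) →ₗ[K] TrivSqZeroExt K (Fin n → K))
    (hP : ∀ x y, P x * P y = P (x * P y + P x * y + (1 : K) • (x * y))) :
    ∀ u : Fin n → K, (P (inr u)).fst = 0 :=
  IsRotaBaxter.fst_apply_inr_eq_zero (w := 1) hP

/-- if `P` is a Rota–Baxter operator of weight one on the truncated
polynomial algebra `R = K ⊕ V`, then `P(V) ⊆ V`. -/
theorem weight_one_maps_V_to_V {K : Type*} [Field K] [CharZero K] {n : ℕ} (hn : 1 ≤ n)
    (P : TrivSqZeroExt K (Fin n → K) →ₗ[K] TrivSqZeroExt K (Fin n → K))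
    (hP : ∀ x y, P x * P y = P (x * P y + P x * y + (1 : K) • (x * y))) :
    ∀ u : Fin n → K, (P (inr u)).fst = 0 :=
  weight_one_maps_V_to_V_general P hP
end

section
/- Let P : R → R be a Rota–Baxter operator of weight zero on the truncated polynomial algebra R = K ⊕ V, and write P(1) = α + v₀ with α ∈ K and v₀ ∈ V. Then α = 0 and P(v₀) = 0. -/
/-!
On the diagonal, the weight-zero identity reads `P x * P x = 2 • P (x * P x)`. For `x ∈ V` the
scalar part `c` of `P x` then satisfies `c² = 2c²`, so `P` maps `V` into `V`. Using this, the
identity at `x = 1` gives `α² = 2α²`, hence `P 1 = v₀ ∈ V`, and then `0 = v₀ * v₀ = 2 • P v₀`.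
-/

open TrivSqZeroExt

theorem rotaBaxter_mul_self {A F : Type*} [CommSemiring A] [FunLike F A A]
    [AddMonoidHomClass F A A] (P : F) (hP : ∀ x y, P x * P y = P (x * P y + P x * y)) (x : A) :
    P x * P x = 2 • P (x * P x) := by
  rw [hP, mul_comm (P x) x, ← two_nsmul, map_nsmul]

theorem IsReduced.eq_zero_of_mul_self_eq_two_nsmul {R : Type*} [Ring R] [IsReduced R] {c : R}
    (h : c * c = 2 • (c * c)) : c = 0 := by
  refine IsReduced.eq_zero c ⟨2, ?_⟩
  rwa [two_nsmul, left_eq_add, ← pow_two] at h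

namespace TrivSqZeroExt

variable {R M : Type*} [CommRing R] [AddCommGroup M] [Module R M]

theorem map_eq_fst_smul_map_one_add_map_inr (P : TrivSqZeroExt R M →ₗ[R] TrivSqZeroExt R M)
    (x : TrivSqZeroExt R M) : P x = x.fst • P 1 + P (inr x.snd) := by
  rw [← map_smul, ← map_add]
  congr 1
  ext <;> simp

variable [Module Rᵐᵒᵖ M] [IsCentralScalar R M]

theorem inr_mul_eq_fst_smul (m : M) (x : TrivSqZeroExt R M) : inr m * x = x.fst • inr m := by
  ext <;> simp [op_smul_eq_smul]

variable [IsReduced R] (P : TrivSqZeroExt R M →ₗ[R] TrivSqZeroExt R M)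
  (hP : ∀ x y, P x * P y = P (x * P y + P x * y))
include hP

theorem fst_map_inr_eq_zero (m : M) : (P (inr m)).fst = 0 := by
  have h := congrArg fst (rotaBaxter_mul_self P hP (inr m))
  rw [inr_mul_eq_fst_smul, map_smul, fst_mul, fst_smul, fst_smul, smul_eq_mul] at h
  exact IsReduced.eq_zero_of_mul_self_eq_two_nsmul h

theorem fst_map_one_eq_zero : (P 1).fst = 0 := by
  have h := congrArg fst (rotaBaxter_mul_self P hP 1)
  rw [one_mul, map_eq_fst_smul_map_one_add_map_inr P (P 1), fst_mul, fst_smul, fst_add,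
    fst_smul, fst_map_inr_eq_zero P hP, add_zero, smul_eq_mul] at h
  exact IsReduced.eq_zero_of_mul_self_eq_two_nsmul h

end TrivSqZeroExt

theorem weight_zero_P_one_components_general {K : Type*} [Field K] [CharZero K] {n : ℕ}
    (P : TrivSqZeroExt K (Fin n → K) →ₗ[K] TrivSqZeroExt K (Fin n → K))
    (hP : ∀ x y, P x * P y = P (x * P y + P x * y))
    (α : K) (v₀ : Fin n → K) (h1 : P 1 = inl α + inr v₀) :
    α = 0 ∧ P (inr v₀) = 0 := by
  have hα : α = 0 := by simpa [h1] using fst_map_one_eq_zero P hP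
  refine ⟨hα, ?_⟩
  have hP1 : P 1 = inr v₀ := by rw [h1, hα, inl_zero, zero_add]
  have h := rotaBaxter_mul_self P hP 1
  rw [one_mul, hP1, inr_mul_inr, ← ofNat_smul_eq_nsmul K] at h
  exact (smul_eq_zero.mp h.symm).resolve_left two_ne_zero

/-- if `P` is a Rota–Baxter operator of weight zero on the truncated
polynomial algebra `R = K ⊕ V` and `P 1 = α + v₀` with `α ∈ K`, `v₀ ∈ V`, then
`α = 0` and `P v₀ = 0`. -/
theorem weight_zero_P_one_components {K : Type*} [Field K] [CharZero K] {n : ℕ} (hn : 1 ≤ n)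
    (P : TrivSqZeroExt K (Fin n → K) →ₗ[K] TrivSqZeroExt K (Fin n → K))
    (hP : ∀ x y, P x * P y = P (x * P y + P x * y))
    (α : K) (v₀ : Fin n → K) (h1 : P 1 = inl α + inr v₀) :
    α = 0 ∧ P (inr v₀) = 0 :=
  weight_zero_P_one_components_general P hP α v₀ h1
end
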